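/- arXiv:2007.15496 — 7 statements merged into one kernel-verified Lean document; each statement's English description precedes it below -/
import Mathlib

section
/- Let E be a real inner product space, n a natural number, z, u : Fin n → E, and μ ∈ E. Then for every permutation π of Fin n, ∑_{i} ‖(μ + z i) − u (π i)‖² − ∑_{i} ‖z i − u (π i)‖² = n·‖μ‖² + 2⟨μ, ∑_i z i⟩ − 2⟨μ, ∑_i u i⟩; in particular, this difference does not depend on the permutation π. -/
open scoped RealInnerProductSpace BigOperators

/-- Key computation in the proof of Proposition 2.2(ii): under a common shift `μ` of the
sample points, the assignment cost changes by an amount independent of the permutation. -/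
theorem shift_cost_difference
    {E : Type*} [NormedAddCommGroup E] [InnerProductSpace ℝ E]
    (n : ℕ) (z u : Fin n → E) (μ : E) (π : Equiv.Perm (Fin n)) :
    (∑ i, ‖(μ + z i) - u (π i)‖ ^ 2) - (∑ i, ‖z i - u (π i)‖ ^ 2)
      = (n : ℝ) * ‖μ‖ ^ 2 + 2 * ⟪μ, ∑ i, z i⟫ - 2 * ⟪μ, ∑ i, u i⟫ := by
  have h : ∀ i, ‖(μ + z i) - u (π i)‖ ^ 2
      = ‖μ‖ ^ 2 + 2 * ⟪μ, z i⟫ - 2 * ⟪μ, u (π i)⟫ + ‖z i - u (π i)‖ ^ 2 := by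
    intro i
    have : (μ + z i) - u (π i) = μ + (z i - u (π i)) := by abel
    rw [this, norm_add_sq_real, inner_sub_right]
    ring
  simp only [h]
  rw [Finset.sum_add_distrib]
  have hu : ∑ i, ⟪μ, u (π i)⟫ = ⟪μ, ∑ i, u i⟫ := by
    rw [inner_sum]
    exact Equiv.sum_comp π (fun i => ⟪μ, u i⟫)
  simp only [Finset.sum_sub_distrib, Finset.sum_add_distrib, ← Finset.mul_sum,
    Finset.sum_const, Finset.card_univ, Fintype.card_fin, nsmul_eq_mul, hu, inner_sum]
  ring
end

section
/- Let E be a real inner product space, n a natural number, z, u : Fin n → E, μ ∈ E, and O : E ≃ₗᵢ E a linear isometry equivalence of E. Then a permutation π₀ of Fin n minimizes the map π ↦ ∑_{i} ‖z i − u (π i)‖² over all permutations of Fin n if and only if π₀ minimizes the map π ↦ ∑_{i} ‖(μ + O (z i)) − O (u (π i))‖² over all permutations of Fin n. -/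
open scoped BigOperators RealInnerProductSpace

/-! The transformed cost of an assignment `σ` differs from the original one by
`card ι * ‖μ‖² + 2 ⟪μ, O (∑ z - ∑ u)⟫`: expanding the square, `O` drops out of the norms,
and the cross terms sum to an expression in `∑ z` and `∑ u`, which do not depend on `σ`.
Adding a constant to every cost does not change the minimizers. -/

section

variable {E ι : Type*} [NormedAddCommGroup E] [InnerProductSpace ℝ E] [Fintype ι]

theorem norm_add_map_sub_map_sq (μ x y : E) (O : E ≃ₗᵢ[ℝ] E) :
    ‖(μ + O x) - O y‖ ^ 2 = ‖x - y‖ ^ 2 + ‖μ‖ ^ 2 + 2 * ⟪μ, O (x - y)⟫ := by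
  have hrearrange : (μ + O x) - O y = μ + O (x - y) := by
    rw [map_sub]
    abel
  rw [hrearrange, norm_add_sq_real, O.norm_map]
  ring

theorem sum_norm_add_map_sub_map_perm_sq (z u : ι → E) (μ : E) (O : E ≃ₗᵢ[ℝ] E)
    (σ : Equiv.Perm ι) :
    ∑ i, ‖(μ + O (z i)) - O (u (σ i))‖ ^ 2 =
      ∑ i, ‖z i - u (σ i)‖ ^ 2 +
        (Fintype.card ι * ‖μ‖ ^ 2 + 2 * ⟪μ, O (∑ i, z i - ∑ i, u i)⟫) := by
  have hdiff : ∑ i, (z i - u (σ i)) = ∑ i, z i - ∑ i, u i := by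
    rw [Finset.sum_sub_distrib, Equiv.sum_comp]
  simp only [norm_add_map_sub_map_sq, Finset.sum_add_distrib, ← Finset.mul_sum, ← inner_sum,
    ← map_sum, hdiff, Finset.sum_const, Finset.card_univ, nsmul_eq_mul]
  ring

end

/-- Proposition 2.2(ii): the optimal assignment between sample and grid (minimizing the sum
of squared Euclidean distances) is unchanged when the sample `z i` is transformed to
`μ + O (z i)` and the grid `u i` to `O (u i)`, for `O` a linear isometry equivalence. -/
theorem optimal_assignment_orthogonal_invariant
    {E : Type*} [NormedAddCommGroup E] [InnerProductSpace ℝ E]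
    (n : ℕ) (z u : Fin n → E) (μ : E) (O : E ≃ₗᵢ[ℝ] E) (π₀ : Equiv.Perm (Fin n)) :
    (∀ π : Equiv.Perm (Fin n),
        (∑ i, ‖z i - u (π₀ i)‖ ^ 2) ≤ ∑ i, ‖z i - u (π i)‖ ^ 2) ↔
    (∀ π : Equiv.Perm (Fin n),
        (∑ i, ‖(μ + O (z i)) - O (u (π₀ i))‖ ^ 2)
          ≤ ∑ i, ‖(μ + O (z i)) - O (u (π i))‖ ^ 2) := by
  simp only [sum_norm_add_map_sub_map_perm_sq, add_le_add_iff_right]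
end

section
/- Let E be a real inner product space, φ : E → ℝ a convex function, and g : E → E a map such that φ has gradient g z at every point z ∈ E (HasGradientAt φ (g z) z for all z). Then for every k, every z : Fin k → E, and every permutation π of Fin k, ∑_{i} ⟨g (z i), z (π i) − z i⟩ ≤ 0. -/
open scoped RealInnerProductSpace BigOperators

/-! By the gradient inequality for convex functions, each term `⟪g (z i), z (π i) - z i⟫` is at
most `φ (z (π i)) - φ (z i)`, and these increments sum to zero along any permutation. -/

/-- Restricting `f` to the segment from `x` to `y` reduces this to the one-variable fact that a
convex function lies above its tangent line. -/
theorem ConvexOn.add_fderiv_sub_le {E : Type*} [NormedAddCommGroup E] [NormedSpace ℝ E]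
    {s : Set E} {f : E → ℝ} {f' : E →L[ℝ] ℝ} {x y : E} (hf : ConvexOn ℝ s f)
    (hx : x ∈ s) (hy : y ∈ s) (hf' : HasFDerivAt f f' x) :
    f x + f' (y - x) ≤ f y := by
  set line := AffineMap.lineMap (k := ℝ) x y
  have hconv : ConvexOn ℝ (line ⁻¹' s) (f ∘ line) := hf.comp_affineMap line
  have hderiv : HasDerivAt (f ∘ line) (f' (y - x)) 0 := by
    refine HasFDerivAt.comp_hasDerivAt (l := f) 0 ?_ AffineMap.hasDerivAt_lineMap
    simpa [line] using hf'
  have hslope := hconv.le_slope_of_hasDerivAt (by simpa [line] using hx) (by simpa [line] using hy)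
    one_pos hderiv
  simp only [slope_def_field, Function.comp_apply, line, AffineMap.lineMap_apply_zero,
    AffineMap.lineMap_apply_one] at hslope
  linarith

theorem ConvexOn.add_inner_gradient_sub_le {E : Type*} [NormedAddCommGroup E]
    [InnerProductSpace ℝ E] [CompleteSpace E] {s : Set E} {f : E → ℝ} {v x y : E}
    (hf : ConvexOn ℝ s f) (hx : x ∈ s) (hy : y ∈ s) (hv : HasGradientAt f v x) :
    f x + ⟪v, y - x⟫ ≤ f y := by
  simpa only [InnerProductSpace.toDual_apply_apply] using hf.add_fderiv_sub_le hx hy hv.hasFDerivAt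

theorem Equiv.Perm.sum_nonpos_of_le_sub {ι M : Type*} [Fintype ι] [AddCommGroup M]
    [PartialOrder M] [IsOrderedAddMonoid M] (π : Equiv.Perm ι) {c a : ι → M}
    (h : ∀ i, c i ≤ a (π i) - a i) :
    ∑ i, c i ≤ 0 :=
  calc ∑ i, c i ≤ ∑ i, (a (π i) - a i) := Finset.sum_le_sum fun i _ => h i
    _ = 0 := by rw [Finset.sum_sub_distrib, Equiv.sum_comp π a, sub_self]

/-- Cyclical monotonicity of the gradient of a convex function (Rockafellar 1966), in
permutation form: key property invoked in the proof of Proposition 2.2(i). -/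
theorem gradient_convex_cyclically_monotone
    {E : Type*} [NormedAddCommGroup E] [InnerProductSpace ℝ E] [CompleteSpace E]
    (φ : E → ℝ) (g : E → E)
    (hφ : ConvexOn ℝ Set.univ φ)
    (hg : ∀ z : E, HasGradientAt φ (g z) z) :
    ∀ (k : ℕ) (z : Fin k → E) (π : Equiv.Perm (Fin k)),
      (∑ i, ⟪g (z i), z (π i) - z i⟫) ≤ 0 := by
  intro k z π
  refine π.sum_nonpos_of_le_sub (a := fun j => φ (z j)) fun i => ?_
  have := hφ.add_inner_gradient_sub_le (Set.mem_univ _) (Set.mem_univ (z (π i))) (hg (z i))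
  linarith
end

section
/- Let (Ω, 𝓕, P) be a probability space, d ≥ 1, E = EuclideanSpace ℝ (Fin d). For each n ≥ 2 let w^{(n)} : Fin n → ℝ satisfy ∑_i w^{(n)} i = 0 and ∑_i (w^{(n)} i)² = 1, and let ζ_{n,i} : Ω → E (for i ∈ Fin n) and ζ_i : Ω → E be square-integrable random vectors such that, for each n: E‖ζ_{n,i} − ζ_i‖² = E‖ζ_{n,0} − ζ_0‖² for every i ∈ Fin n, and E⟨ζ_{n,i} − ζ_i, ζ_{n,j} − ζ_j⟩ = E⟨ζ_{n,0} − ζ_0, ζ_{n,1} − ζ_1⟩ for all i ≠ j in Fin n. If ζ_{n,0} → ζ_0 almost surely as n → ∞ and E‖ζ_{n,0}‖² → E‖ζ_0‖² < ∞, then E‖∑_{i ∈ Fin n} w^{(n)} i • (ζ_{n,i} − ζ_i)‖² → 0 as n → ∞. -/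
open MeasureTheory Filter
open scoped RealInnerProductSpace Topology BigOperators

/-! Expanding the square, the exchangeability of the second moments of `D i = ζn n i - ζ i`
turns `E‖∑ w i • D i‖²` into `c (∑ w)² + (a - c) ∑ w² = a - c`, with `a = E‖D 0‖²` and
`c = E⟪D 0, D 1⟫`; since `|c| ≤ a`, this is at most `2a`. Finally `a → 0`: almost sure
convergence plus convergence of second moments gives convergence in quadratic mean, by Fatou's
lemma applied to `2 (‖ζn n 0‖² + ‖ζ 0‖²) - ‖ζn n 0 - ζ 0‖² ≥ 0`. -/

theorem norm_sub_sq_le_two_mul_add_sq {E : Type*} [SeminormedAddCommGroup E] (x y : E) :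
    ‖x - y‖ ^ 2 ≤ 2 * (‖x‖ ^ 2 + ‖y‖ ^ 2) :=
  (pow_le_pow_left₀ (norm_nonneg _) (norm_sub_le x y) 2).trans add_sq_le

theorem two_mul_abs_real_inner_le_add_sq {E : Type*} [SeminormedAddCommGroup E]
    [InnerProductSpace ℝ E] (x y : E) : 2 * |⟪x, y⟫| ≤ ‖x‖ ^ 2 + ‖y‖ ^ 2 :=
  calc 2 * |⟪x, y⟫| ≤ 2 * ‖x‖ * ‖y‖ := by
        rw [mul_assoc]
        exact mul_le_mul_of_nonneg_left (abs_real_inner_le_norm x y) zero_le_two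
    _ ≤ ‖x‖ ^ 2 + ‖y‖ ^ 2 := two_mul_le_add_sq _ _

theorem Finset.sum_sum_mul_mul_ite_eq {ι : Type*} [DecidableEq ι] (s : Finset ι) (w : ι → ℝ)
    (a c : ℝ) :
    ∑ i ∈ s, ∑ j ∈ s, w i * w j * (if i = j then a else c)
      = c * (∑ i ∈ s, w i) ^ 2 + (a - c) * ∑ i ∈ s, w i ^ 2 := by
  have h_split : ∀ i j, w i * w j * (if i = j then a else c)
      = c * (w i * w j) + (if i = j then (a - c) * w i ^ 2 else 0) := fun i j => by
    split_ifs with hij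
    · subst hij; ring
    · ring
  simp only [h_split, Finset.sum_add_distrib, Finset.sum_ite_eq, Finset.sum_ite_mem,
    Finset.inter_self, ← Finset.mul_sum, sq, Finset.sum_mul_sum]

section Integral

variable {α : Type*} [MeasurableSpace α] {μ : Measure α}

theorem integral_le_of_frequently_integral_le {h : ℕ → α → ℝ} {H : α → ℝ} {L : ℝ}
    (hh : ∀ n, Integrable (h n) μ) (hH : Integrable H μ) (hh_nonneg : ∀ n, 0 ≤ᵐ[μ] h n)
    (h_lim : ∀ᵐ x ∂μ, Tendsto (h · x) atTop (𝓝 (H x)))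
    (hL : ∃ᶠ n in atTop, ∫ x, h n x ∂μ ≤ L) : ∫ x, H x ∂μ ≤ L := by
  have hH_nonneg : 0 ≤ᵐ[μ] H := by
    filter_upwards [h_lim, ae_all_iff.2 hh_nonneg] with x hx hx_nonneg
    exact ge_of_tendsto' hx hx_nonneg
  obtain ⟨n, hn⟩ := hL.exists
  have hL_nonneg : 0 ≤ L := (integral_nonneg_of_ae (hh_nonneg n)).trans hn
  rw [← ENNReal.ofReal_le_ofReal_iff hL_nonneg,
    ofReal_integral_eq_lintegral_ofReal hH hH_nonneg]
  calc ∫⁻ x, ENNReal.ofReal (H x) ∂μ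
      = ∫⁻ x, liminf (fun n => ENNReal.ofReal (h n x)) atTop ∂μ := by
        refine lintegral_congr_ae ?_
        filter_upwards [h_lim] with x hx
        exact ((ENNReal.continuous_ofReal.tendsto _).comp hx).liminf_eq.symm
    _ ≤ liminf (fun n => ∫⁻ x, ENNReal.ofReal (h n x) ∂μ) atTop :=
        lintegral_liminf_le' fun n => (hh n).aemeasurable.ennreal_ofReal
    _ ≤ ENNReal.ofReal L := by
        refine liminf_le_of_frequently_le' (hL.mono fun n hn => ?_)
        rw [← ofReal_integral_eq_lintegral_ofReal (hh n) (hh_nonneg n)]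
        exact ENNReal.ofReal_le_ofReal hn

theorem tendsto_integral_zero_of_le_of_tendsto_integral {f g : ℕ → α → ℝ} {G : α → ℝ}
    (hf : ∀ n, Integrable (f n) μ) (hg : ∀ n, Integrable (g n) μ) (hG : Integrable G μ)
    (hf_nonneg : ∀ n, 0 ≤ᵐ[μ] f n) (hfg : ∀ n, f n ≤ᵐ[μ] g n)
    (hf_lim : ∀ᵐ x ∂μ, Tendsto (f · x) atTop (𝓝 0))
    (hg_lim : ∀ᵐ x ∂μ, Tendsto (g · x) atTop (𝓝 (G x)))
    (hg_int : Tendsto (fun n => ∫ x, g n x ∂μ) atTop (𝓝 (∫ x, G x ∂μ))) :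
    Tendsto (fun n => ∫ x, f n x ∂μ) atTop (𝓝 0) := by
  refine tendsto_order.2 ⟨fun a ha => .of_forall fun n =>
    ha.trans_le (integral_nonneg_of_ae (hf_nonneg n)), fun ε hε => ?_⟩
  by_contra h_freq
  rw [not_eventually] at h_freq
  have h_gap : ∃ᶠ n in atTop, ∫ x, (g n x - f n x) ∂μ ≤ ∫ x, G x ∂μ - ε / 2 := by
    refine (h_freq.and_eventually (hg_int.eventually (ge_mem_nhds
      (by linarith : ∫ x, G x ∂μ < ∫ x, G x ∂μ + ε / 2)))).mono fun n hn => ?_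
    rw [integral_sub (hg n) (hf n)]
    linarith [not_lt.1 hn.1, hn.2]
  have := integral_le_of_frequently_integral_le (fun n => (hg n).sub (hf n)) hG
    (fun n => (hfg n).mono fun x hx => sub_nonneg.2 hx)
    (by filter_upwards [hf_lim, hg_lim] with x hfx hgx; simpa using hgx.sub hfx) h_gap
  linarith

theorem tendsto_integral_norm_sub_sq_of_tendsto_ae {E : Type*} [NormedAddCommGroup E]
    {g : ℕ → α → E} {g₀ : α → E} (hg : ∀ n, MemLp (g n) 2 μ) (hg₀ : MemLp g₀ 2 μ)
    (h_lim : ∀ᵐ x ∂μ, Tendsto (g · x) atTop (𝓝 (g₀ x)))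
    (h_mom : Tendsto (fun n => ∫ x, ‖g n x‖ ^ 2 ∂μ) atTop (𝓝 (∫ x, ‖g₀ x‖ ^ 2 ∂μ))) :
    Tendsto (fun n => ∫ x, ‖g n x - g₀ x‖ ^ 2 ∂μ) atTop (𝓝 0) := by
  have hsq : ∀ {u : α → E}, MemLp u 2 μ → Integrable (fun x => ‖u x‖ ^ 2) μ :=
    fun hu => hu.integrable_norm_pow two_ne_zero
  have h_bound_int : ∀ {u : α → E}, MemLp u 2 μ → ∫ x, 2 * (‖u x‖ ^ 2 + ‖g₀ x‖ ^ 2) ∂μ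
      = 2 * (∫ x, ‖u x‖ ^ 2 ∂μ + ∫ x, ‖g₀ x‖ ^ 2 ∂μ) := fun hu => by
    rw [integral_const_mul, integral_add (hsq hu) (hsq hg₀)]
  refine tendsto_integral_zero_of_le_of_tendsto_integral
    (g := fun n x => 2 * (‖g n x‖ ^ 2 + ‖g₀ x‖ ^ 2))
    (G := fun x => 2 * (‖g₀ x‖ ^ 2 + ‖g₀ x‖ ^ 2))
    (fun n => hsq ((hg n).sub hg₀)) (fun n => ((hsq (hg n)).add (hsq hg₀)).const_mul 2)
    (((hsq hg₀).add (hsq hg₀)).const_mul 2)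
    (fun n => .of_forall fun x => sq_nonneg _)
    (fun n => .of_forall fun x => norm_sub_sq_le_two_mul_add_sq _ _) ?_ ?_ ?_
  · filter_upwards [h_lim] with x hx
    simpa using (tendsto_sub_nhds_zero_iff.2 hx).norm.pow 2
  · filter_upwards [h_lim] with x hx
    exact ((hx.norm.pow 2).add_const _).const_mul 2
  · simp only [h_bound_int (hg _), h_bound_int hg₀]
    exact (h_mom.add_const _).const_mul 2

section InnerProduct

variable {E : Type*} [NormedAddCommGroup E] [InnerProductSpace ℝ E]

theorem MeasureTheory.MemLp.integrable_real_inner {X Y : α → E} (hX : MemLp X 2 μ)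
    (hY : MemLp Y 2 μ) :
    Integrable (fun x => ⟪X x, Y x⟫) μ := by
  refine Integrable.mono' (g := fun x => (‖X x‖ ^ 2 + ‖Y x‖ ^ 2) / 2)
    (((hX.integrable_norm_pow two_ne_zero).add (hY.integrable_norm_pow two_ne_zero)).div_const 2)
    (hX.1.inner hY.1) (.of_forall fun x => ?_)
  rw [Real.norm_eq_abs]
  linarith [two_mul_abs_real_inner_le_add_sq (X x) (Y x)]

theorem two_mul_abs_integral_inner_le {X Y : α → E} (hX : MemLp X 2 μ) (hY : MemLp Y 2 μ) :
    2 * |∫ x, ⟪X x, Y x⟫ ∂μ| ≤ ∫ x, ‖X x‖ ^ 2 ∂μ + ∫ x, ‖Y x‖ ^ 2 ∂μ := by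
  have hX2 := hX.integrable_norm_pow two_ne_zero
  have hY2 := hY.integrable_norm_pow two_ne_zero
  calc 2 * |∫ x, ⟪X x, Y x⟫ ∂μ| ≤ 2 * ∫ x, |⟪X x, Y x⟫| ∂μ := by
        gcongr; exact abs_integral_le_integral_abs
    _ = ∫ x, 2 * |⟪X x, Y x⟫| ∂μ := (integral_const_mul _ _).symm
    _ ≤ ∫ x, (‖X x‖ ^ 2 + ‖Y x‖ ^ 2) ∂μ :=
        integral_mono ((hX.integrable_real_inner hY).abs.const_mul 2) (hX2.add hY2)
          fun x => two_mul_abs_real_inner_le_add_sq (X x) (Y x)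
    _ = ∫ x, ‖X x‖ ^ 2 ∂μ + ∫ x, ‖Y x‖ ^ 2 ∂μ := integral_add hX2 hY2

theorem integral_norm_sum_smul_sq {ι : Type*} (s : Finset ι) {X : ι → α → E}
    (hX : ∀ i, MemLp (X i) 2 μ) (w : ι → ℝ) :
    ∫ x, ‖∑ i ∈ s, w i • X i x‖ ^ 2 ∂μ
      = ∑ i ∈ s, ∑ j ∈ s, w i * w j * ∫ x, ⟪X i x, X j x⟫ ∂μ := by
  simp_rw [← real_inner_self_eq_norm_sq, sum_inner, inner_sum, real_inner_smul_left,
    real_inner_smul_right, ← mul_assoc]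
  have h_int : ∀ i j, Integrable (fun x => w i * w j * ⟪X i x, X j x⟫) μ :=
    fun i j => ((hX i).integrable_real_inner (hX j)).const_mul _
  rw [integral_finsetSum _ fun i _ => integrable_finsetSum _ fun j _ => h_int i j]
  refine Finset.sum_congr rfl fun i _ => ?_
  rw [integral_finsetSum _ fun j _ => h_int i j]
  exact Finset.sum_congr rfl fun j _ => integral_const_mul _ _

theorem integral_norm_sum_smul_sq_of_moments {ι : Type*} [Fintype ι] {X : ι → α → E}
    (hX : ∀ i, MemLp (X i) 2 μ) (w : ι → ℝ) {a c : ℝ}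
    (h_diag : ∀ i, ∫ x, ‖X i x‖ ^ 2 ∂μ = a) (h_off : ∀ i j, i ≠ j → ∫ x, ⟪X i x, X j x⟫ ∂μ = c) :
    ∫ x, ‖∑ i, w i • X i x‖ ^ 2 ∂μ = c * (∑ i, w i) ^ 2 + (a - c) * ∑ i, w i ^ 2 := by
  classical
  rw [integral_norm_sum_smul_sq _ hX, ← Finset.sum_sum_mul_mul_ite_eq]
  refine Finset.sum_congr rfl fun i _ => Finset.sum_congr rfl fun j _ => ?_
  split_ifs with hij
  · subst hij; simp_rw [real_inner_self_eq_norm_sq, h_diag]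
  · rw [h_off i j hij]

end InnerProduct

end Integral

theorem hajek_representation_quadratic_mean_general
    {Ω : Type*} [MeasurableSpace Ω] (P : Measure Ω)
    {d : ℕ}
    (w : (n : ℕ) → Fin (n + 2) → ℝ)
    (ζn : (n : ℕ) → Fin (n + 2) → Ω → EuclideanSpace ℝ (Fin d))
    (ζ : ℕ → Ω → EuclideanSpace ℝ (Fin d))
    (hw0 : ∀ n, ∑ i, w n i = 0) (hw2 : ∀ n, ∑ i, (w n i) ^ 2 = 1)
    (hζn : ∀ n i, MemLp (ζn n i) 2 P) (hζ : ∀ i, MemLp (ζ i) 2 P)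
    (hnorm : ∀ n, ∀ i : Fin (n + 2),
      ∫ ω, ‖ζn n i ω - ζ (i : ℕ) ω‖ ^ 2 ∂P
        = ∫ ω, ‖ζn n 0 ω - ζ 0 ω‖ ^ 2 ∂P)
    (hcross : ∀ n, ∀ i j : Fin (n + 2), i ≠ j →
      ∫ ω, ⟪ζn n i ω - ζ (i : ℕ) ω, ζn n j ω - ζ (j : ℕ) ω⟫ ∂P
        = ∫ ω, ⟪ζn n 0 ω - ζ 0 ω, ζn n 1 ω - ζ 1 ω⟫ ∂P)
    (has : ∀ᵐ ω ∂P, Tendsto (fun n => ζn n 0 ω) atTop (𝓝 (ζ 0 ω)))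
    (hmom : Tendsto (fun n => ∫ ω, ‖ζn n 0 ω‖ ^ 2 ∂P) atTop
      (𝓝 (∫ ω, ‖ζ 0 ω‖ ^ 2 ∂P))) :
    Tendsto
      (fun n => ∫ ω, ‖∑ i : Fin (n + 2), w n i • (ζn n i ω - ζ (i : ℕ) ω)‖ ^ 2 ∂P)
      atTop (𝓝 0) := by
  set a : ℕ → ℝ := fun n => ∫ ω, ‖ζn n 0 ω - ζ 0 ω‖ ^ 2 ∂P
  set c : ℕ → ℝ := fun n => ∫ ω, ⟪ζn n 0 ω - ζ 0 ω, ζn n 1 ω - ζ 1 ω⟫ ∂P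
  have hD : ∀ n (i : Fin (n + 2)), MemLp (fun ω => ζn n i ω - ζ i ω) 2 P :=
    fun n i => (hζn n i).sub (hζ i)
  have h_eq : ∀ n, ∫ ω, ‖∑ i : Fin (n + 2), w n i • (ζn n i ω - ζ i ω)‖ ^ 2 ∂P = a n - c n :=
    fun n => by
      rw [integral_norm_sum_smul_sq_of_moments (hD n) (w n) (hnorm n) (hcross n), hw0, hw2]
      ring
  have h_cross_le : ∀ n, 2 * |c n| ≤ a n + a n := fun n => by
    have := two_mul_abs_integral_inner_le (hD n 0) (hD n 1)
    rwa [hnorm n 1] at this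
  have ha : Tendsto a atTop (𝓝 0) :=
    tendsto_integral_norm_sub_sq_of_tendsto_ae (fun n => hζn n 0) (hζ 0) has hmom
  refine squeeze_zero (fun n => integral_nonneg fun ω => sq_nonneg _)
    (fun n => (h_eq n).trans_le ?_) (by simpa using ha.const_mul 2)
  linarith [neg_abs_le (c n), h_cross_le n]

/-- Abstract form of the Hájek asymptotic representation (Proposition 3.1(i)): for a
triangular array of approximate scores `ζn n i` and exact scores `ζ i` with exchangeable
second moments of the differences, centered normalized weights, a.s. convergence of
`ζn n 0` to `ζ 0` and convergence of second moments, the weighted sum of differences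
converges to zero in quadratic mean. (The sample size is parametrized as `n + 2 ≥ 2`.) -/
theorem hajek_representation_quadratic_mean
    {Ω : Type*} [MeasurableSpace Ω] (P : Measure Ω) [IsProbabilityMeasure P]
    {d : ℕ} (hd : 1 ≤ d)
    (w : (n : ℕ) → Fin (n + 2) → ℝ)
    (ζn : (n : ℕ) → Fin (n + 2) → Ω → EuclideanSpace ℝ (Fin d))
    (ζ : ℕ → Ω → EuclideanSpace ℝ (Fin d))
    (hw0 : ∀ n, ∑ i, w n i = 0) (hw2 : ∀ n, ∑ i, (w n i) ^ 2 = 1)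
    (hζn : ∀ n i, MemLp (ζn n i) 2 P) (hζ : ∀ i, MemLp (ζ i) 2 P)
    (hnorm : ∀ n, ∀ i : Fin (n + 2),
      ∫ ω, ‖ζn n i ω - ζ (i : ℕ) ω‖ ^ 2 ∂P
        = ∫ ω, ‖ζn n 0 ω - ζ 0 ω‖ ^ 2 ∂P)
    (hcross : ∀ n, ∀ i j : Fin (n + 2), i ≠ j →
      ∫ ω, ⟪ζn n i ω - ζ (i : ℕ) ω, ζn n j ω - ζ (j : ℕ) ω⟫ ∂P
        = ∫ ω, ⟪ζn n 0 ω - ζ 0 ω, ζn n 1 ω - ζ 1 ω⟫ ∂P)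
    (has : ∀ᵐ ω ∂P, Tendsto (fun n => ζn n 0 ω) atTop (𝓝 (ζ 0 ω)))
    (hmom : Tendsto (fun n => ∫ ω, ‖ζn n 0 ω‖ ^ 2 ∂P) atTop
      (𝓝 (∫ ω, ‖ζ 0 ω‖ ^ 2 ∂P))) :
    Tendsto
      (fun n => ∫ ω, ‖∑ i : Fin (n + 2), w n i • (ζn n i ω - ζ (i : ℕ) ω)‖ ^ 2 ∂P)
      atTop (𝓝 0) :=
  hajek_representation_quadratic_mean_general P w ζn ζ hw0 hw2 hζn hζ hnorm hcross has hmom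
end

section
/- Let E be a real inner product space, K ≥ 2, and n_k > 0 real numbers for k ∈ Fin K with n := ∑_k n_k. Let T : Fin K → E with ∑_{k ∈ Fin K} T k = 0. For j ∈ Fin (K−1) set v j := n_{j.castSucc}/n, and define the (K−1)×(K−1) matrix M by M j k := (if j = k then (v j)⁻¹ else 0) + (1 − ∑_{l ∈ Fin (K−1)} v l)⁻¹. Then (1/n) · ∑_{j, k ∈ Fin (K−1)} M j k · ⟨T j.castSucc, T k.castSucc⟩ = ∑_{k ∈ Fin K} ‖T k‖² / n_k. -/
open scoped RealInnerProductSpace BigOperators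

/-- Simplification of the one-way MANOVA center-outward rank statistic (Section 5.3.2):
when the group score sums `T k` add up to zero over all `K + 1 ≥ 2` groups, the quadratic
form in the first `K` group sums with weighting matrix
`diag(1/v) + (1 − ∑ v)⁻¹·(all-ones)` (the inverse of `diag(v) − v vᵀ`, `v j = n_j/n`)
equals `∑_k ‖T k‖²/n_k`. -/
theorem manova_quadratic_form_simplification
    {E : Type*} [NormedAddCommGroup E] [InnerProductSpace ℝ E]
    (K : ℕ) (hK : 1 ≤ K)
    (nk : Fin (K + 1) → ℝ) (hnk : ∀ k, 0 < nk k)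
    (n : ℝ) (hn : n = ∑ k, nk k)
    (T : Fin (K + 1) → E) (hT : ∑ k, T k = 0)
    (v : Fin K → ℝ) (hv : ∀ j, v j = nk j.castSucc / n)
    (M : Matrix (Fin K) (Fin K) ℝ)
    (hM : ∀ j k, M j k = (if j = k then (v j)⁻¹ else 0) + (1 - ∑ l, v l)⁻¹) :
    (1 / n) * ∑ j, ∑ k, M j k * ⟪T j.castSucc, T k.castSucc⟫
      = ∑ k, ‖T k‖ ^ 2 / nk k := by
  have hn0 : 0 < n := by
    rw [hn]; exact Finset.sum_pos (fun k _ => hnk k) Finset.univ_nonempty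
  have hnsplit : n = (∑ l : Fin K, nk l.castSucc) + nk (Fin.last K) := by
    rw [hn, Fin.sum_univ_castSucc]
  have hvsum : 1 - ∑ l, v l = nk (Fin.last K) / n := by
    simp only [hv, ← Finset.sum_div]
    field_simp
    linarith [hnsplit]
  have hS : ∑ j : Fin K, T j.castSucc = - T (Fin.last K) := by
    have h := hT
    rw [Fin.sum_univ_castSucc] at h
    exact eq_neg_of_add_eq_zero_left h
  have key : ∑ j, ∑ k, M j k * ⟪T j.castSucc, T k.castSucc⟫
      = (∑ j : Fin K, (v j)⁻¹ * ‖T j.castSucc‖ ^ 2)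
        + (nk (Fin.last K) / n)⁻¹ * ‖T (Fin.last K)‖ ^ 2 := by
    simp only [hM, add_mul, Finset.sum_add_distrib]
    congr 1
    · refine Finset.sum_congr rfl fun j _ => ?_
      rw [Finset.sum_eq_single j]
      · simp [real_inner_self_eq_norm_sq]
      · intro k _ hk; simp [Ne.symm hk]
      · simp
    · have h2 : ∑ j : Fin K, ∑ k : Fin K,
          (1 - ∑ l, v l)⁻¹ * ⟪T j.castSucc, T k.castSucc⟫
          = (1 - ∑ l, v l)⁻¹
            * ⟪∑ j : Fin K, T j.castSucc, ∑ k : Fin K, T k.castSucc⟫ := by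
        rw [sum_inner, Finset.mul_sum]
        exact Finset.sum_congr rfl fun j _ => by rw [inner_sum, Finset.mul_sum]
      rw [h2, hS, inner_neg_neg, real_inner_self_eq_norm_sq, hvsum]
  rw [key, Fin.sum_univ_castSucc (f := fun k => ‖T k‖ ^ 2 / nk k),
    mul_add, Finset.mul_sum]
  have hlast0 := (hnk (Fin.last K)).ne'
  congr 1
  · refine Finset.sum_congr rfl fun j _ => ?_
    have := (hnk j.castSucc).ne'
    rw [hv]
    field_simp
  · field_simp
end

section
/- Let f : ℝ → ℝ be monotone (nondecreasing or nonincreasing) on the open interval (0,1) and integrable on (0,1). Then (1/n) · ∑_{r=1}^{n} f(r/(n+1)) → ∫_0^1 f(u) du as n → ∞. -/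
/-!
On the grid `k / (n + 1)`, monotonicity of `f` traps each value `f (r / (n + 1)) / (n + 1)` between
the integrals of `f` over the two adjacent grid cells. Summing, the Riemann sum over the interior
grid points lies between `∫ f` over `[0, n / (n + 1)]` and over `[1 / (n + 1), 1]`, and both tend
to `∫₀¹ f` by continuity of the primitive of an integrable function. The normalisation `1 / n`
instead of `1 / (n + 1)` costs only the factor `n / (n + 1) → 1`, and the antitone case follows by
negation.
-/

open MeasureTheory Filter Set intervalIntegral
open scoped Topology Interval

section MonotoneOn

variable {f : ℝ → ℝ} {s : Set ℝ} {a b : ℝ}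

theorem MonotoneOn.intervalIntegral_le_mul_right (hf : MonotoneOn f s) (hab : a < b)
    (hs : Ioc a b ⊆ s) (hint : IntervalIntegrable f volume a b) :
    ∫ x in a..b, f x ≤ (b - a) * f b :=
  calc ∫ x in a..b, f x ≤ ∫ _ in a..b, f b :=
        integral_mono_on_of_le_Ioo hab.le hint intervalIntegrable_const fun x hx ↦
          hf (hs (Ioo_subset_Ioc_self hx)) (hs (right_mem_Ioc.2 hab)) hx.2.le
    _ = (b - a) * f b := by rw [intervalIntegral.integral_const, smul_eq_mul]

theorem MonotoneOn.mul_left_le_intervalIntegral (hf : MonotoneOn f s) (hab : a < b)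
    (hs : Ico a b ⊆ s) (hint : IntervalIntegrable f volume a b) :
    (b - a) * f a ≤ ∫ x in a..b, f x :=
  calc (b - a) * f a = ∫ _ in a..b, f a := by rw [intervalIntegral.integral_const, smul_eq_mul]
    _ ≤ ∫ x in a..b, f x :=
        integral_mono_on_of_le_Ioo hab.le intervalIntegrable_const hint fun x hx ↦
          hf (hs (left_mem_Ico.2 hab)) (hs (Ioo_subset_Ico_self hx)) hx.1.le

end MonotoneOn

theorem tendsto_intervalIntegral_of_tendsto_nhdsWithin {ι : Type*} {l : Filter ι} {f : ℝ → ℝ}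
    {a b c : ℝ} {u : ι → ℝ} (hint : IntervalIntegrable f volume a b) (hc : c ∈ [[a, b]])
    (hu : Tendsto u l (𝓝[[[a, b]]] c)) :
    Tendsto (fun i ↦ ∫ x in a..u i, f x) l (𝓝 (∫ x in a..c, f x)) :=
  ((continuousOn_primitive_interval' hint left_mem_uIcc) c hc).tendsto.comp hu

noncomputable def interiorRiemannSum (f : ℝ → ℝ) (n : ℕ) : ℝ :=
  (∑ r ∈ Finset.Icc 1 n, f (r / (n + 1))) / (n + 1)

namespace interiorRiemannSum

variable {f : ℝ → ℝ}

@[simp]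
lemma neg (n : ℕ) : interiorRiemannSum (fun x ↦ -f x) n = -interiorRiemannSum f n := by
  simp only [interiorRiemannSum, Finset.sum_neg_distrib, neg_div]

lemma eq_sum_range (n : ℕ) :
    interiorRiemannSum f n = ∑ k ∈ Finset.range n, (1 / (n + 1 : ℝ)) * f ((k + 1) / (n + 1)) := by
  rw [interiorRiemannSum, ← Finset.Ico_add_one_right_eq_Icc, Finset.sum_Ico_eq_sum_range,
    Finset.sum_div, add_tsub_cancel_right]
  refine Finset.sum_congr rfl fun k _ ↦ ?_
  push_cast
  rw [add_comm 1 (k : ℝ)]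
  ring

lemma natCast_div_le_one {k n : ℕ} (hk : k ≤ n + 1) : (k / (n + 1) : ℝ) ≤ 1 :=
  div_le_one_of_le₀ (by exact_mod_cast hk) (by positivity)

lemma natCast_div_mem_uIcc {k n : ℕ} (hk : k ≤ n + 1) : (k / (n + 1) : ℝ) ∈ [[0, 1]] := by
  rw [uIcc_of_le zero_le_one]
  exact ⟨by positivity, natCast_div_le_one hk⟩

lemma natCast_div_lt_one {k n : ℕ} (hk : k ≤ n) : (k / (n + 1) : ℝ) < 1 :=
  (div_lt_one (by positivity)).2 (by exact_mod_cast Nat.lt_succ_of_le hk)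

lemma intervalIntegrable_gridCell (hint : IntervalIntegrable f volume 0 1) {k n : ℕ} (hk : k ≤ n) :
    IntervalIntegrable f volume (k / (n + 1)) ((k + 1 : ℕ) / (n + 1)) :=
  hint.mono_set <|
    uIcc_subset_uIcc (natCast_div_mem_uIcc (by omega)) (natCast_div_mem_uIcc (by omega))

theorem integral_le (hf : MonotoneOn f (Ioo 0 1)) (hint : IntervalIntegrable f volume 0 1)
    (n : ℕ) : ∫ x in 0..(n / (n + 1) : ℝ), f x ≤ interiorRiemannSum f n := by
  have hsum := sum_integral_adjacent_intervals (a := fun k : ℕ ↦ (k / (n + 1) : ℝ))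
    fun k hk ↦ intervalIntegrable_gridCell hint hk.le
  simp only [Nat.cast_zero, zero_div] at hsum
  rw [← hsum, eq_sum_range]
  gcongr with k hk
  have hkn : k + 1 ≤ n := Finset.mem_range.1 hk
  calc ∫ x in k / (n + 1 : ℝ)..(k + 1 : ℕ) / (n + 1), f x
      ≤ ((k + 1 : ℕ) / (n + 1) - k / (n + 1)) * f ((k + 1 : ℕ) / (n + 1)) :=
        hf.intervalIntegral_le_mul_right (by gcongr; simp)
          (Ioc_subset_Ioo (by positivity) (natCast_div_lt_one hkn))
          (intervalIntegrable_gridCell hint (by omega))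
    _ = 1 / (n + 1) * f ((k + 1) / (n + 1)) := by push_cast; ring

theorem le_integral (hf : MonotoneOn f (Ioo 0 1)) (hint : IntervalIntegrable f volume 0 1)
    (n : ℕ) : interiorRiemannSum f n ≤ ∫ x in (1 / (n + 1) : ℝ)..1, f x := by
  have hsum := sum_integral_adjacent_intervals (a := fun k : ℕ ↦ ((k + 1 : ℕ) / (n + 1) : ℝ))
    fun k hk ↦ intervalIntegrable_gridCell hint hk
  have hN : (n + 1 : ℝ) ≠ 0 := by positivity
  simp only [Nat.cast_add, Nat.cast_one, zero_add, div_self hN] at hsum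
  rw [← hsum, eq_sum_range]
  gcongr with k hk
  have hkn : k + 1 ≤ n := Finset.mem_range.1 hk
  calc 1 / (n + 1) * f ((k + 1) / (n + 1))
      = ((k + 1 + 1 : ℕ) / (n + 1) - (k + 1 : ℕ) / (n + 1)) * f ((k + 1 : ℕ) / (n + 1)) := by
        push_cast; ring
    _ ≤ ∫ x in (k + 1 : ℕ) / (n + 1 : ℝ)..(k + 1 + 1 : ℕ) / (n + 1), f x :=
        hf.mul_left_le_intervalIntegral (by gcongr; simp)
          (Ico_subset_Ioo (by positivity) (natCast_div_le_one (by omega)))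
          (intervalIntegrable_gridCell hint hkn)
    _ = _ := by push_cast; rfl

theorem _root_.MonotoneOn.tendsto_interiorRiemannSum (hf : MonotoneOn f (Ioo 0 1))
    (hint : IntervalIntegrable f volume 0 1) :
    Tendsto (interiorRiemannSum f) atTop (𝓝 (∫ x in 0..1, f x)) := by
  have hlow : Tendsto (fun n : ℕ ↦ ∫ x in 0..(n / (n + 1) : ℝ), f x) atTop
      (𝓝 (∫ x in 0..1, f x)) :=
    tendsto_intervalIntegral_of_tendsto_nhdsWithin hint right_mem_uIcc <|
      tendsto_nhdsWithin_iff.2 ⟨tendsto_natCast_div_add_atTop 1,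
        .of_forall fun n ↦ natCast_div_mem_uIcc n.le_succ⟩
  have hmem (n : ℕ) : (1 / (n + 1) : ℝ) ∈ [[0, 1]] := by
    simpa using natCast_div_mem_uIcc (Nat.le_add_left 1 n)
  have hupp : Tendsto (fun n : ℕ ↦ ∫ x in (1 / (n + 1) : ℝ)..1, f x) atTop
      (𝓝 (∫ x in 0..1, f x)) := by
    have := (tendsto_intervalIntegral_of_tendsto_nhdsWithin hint left_mem_uIcc <|
      tendsto_nhdsWithin_iff.2 ⟨tendsto_one_div_add_atTop_nhds_zero_nat, .of_forall hmem⟩).const_sub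
        (∫ x in 0..1, f x)
    rw [integral_same, sub_zero] at this
    exact this.congr fun n ↦ integral_interval_sub_left hint
      (hint.mono_set (uIcc_subset_uIcc left_mem_uIcc (hmem n)))
  exact tendsto_of_tendsto_of_tendsto_of_le_of_le hlow hupp (integral_le hf hint)
    (le_integral hf hint)

theorem _root_.AntitoneOn.tendsto_interiorRiemannSum (hf : AntitoneOn f (Ioo 0 1))
    (hint : IntervalIntegrable f volume 0 1) :
    Tendsto (interiorRiemannSum f) atTop (𝓝 (∫ x in 0..1, f x)) := by
  simpa using (hf.neg.tendsto_interiorRiemannSum hint.neg).neg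

end interiorRiemannSum

/-- Riemann-sum convergence for monotone integrable score functions (sufficiency claim
after Assumption 2.1): if `f` is monotone and integrable on `(0,1)`, then
`n⁻¹ ∑_{r=1}^n f(r/(n+1)) → ∫₀¹ f`. -/
theorem monotone_score_riemann_sum
    (f : ℝ → ℝ)
    (hmono : MonotoneOn f (Set.Ioo 0 1) ∨ AntitoneOn f (Set.Ioo 0 1))
    (hint : IntegrableOn f (Set.Ioo 0 1)) :
    Tendsto
      (fun n : ℕ => (1 / (n : ℝ)) * ∑ r ∈ Finset.Icc 1 n, f ((r : ℝ) / ((n : ℝ) + 1)))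
      atTop (𝓝 (∫ u in Set.Ioo (0 : ℝ) 1, f u)) := by
  have hint' : IntervalIntegrable f volume 0 1 :=
    (intervalIntegrable_iff_integrableOn_Ioo_of_le zero_le_one).2 hint
  have hsum : Tendsto (interiorRiemannSum f) atTop (𝓝 (∫ u in Ioo 0 1, f u)) := by
    rw [← integral_Ioc_eq_integral_Ioo, ← integral_of_le zero_le_one]
    exact hmono.elim (·.tendsto_interiorRiemannSum hint') (·.tendsto_interiorRiemannSum hint')
  have hratio := hsum.div (tendsto_natCast_div_add_atTop (1 : ℝ)) one_ne_zero
  rw [div_one] at hratio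
  refine hratio.congr fun n ↦ ?_
  rcases n.eq_zero_or_pos with rfl | hn
  · simp
  · simp only [Pi.div_apply, interiorRiemannSum]
    field_simp
end

section
/- Let d ≥ 1, E = EuclideanSpace ℝ (Fin d), and let σ be a rotation-invariant Borel probability measure on E with σ({0}) = 0. Let g : ℝ → ℝ be measurable with ∫ g(‖x‖)² dσ(x) < ∞. Let (Ω, 𝓕, P) be a probability space and V : Fin n → Ω → E independent random vectors (iIndepFun), each with distribution σ (Measure.map (V i) P = σ). Let w : Fin n → ℝ with ∑_i (w i)² = 1, and define T : Ω → E by T := ∑_i w i • (g(‖V i‖)/‖V i‖) • V i. Then ∫ T dP = 0, and for all coordinates p, q ∈ Fin d: ∫ T_p · T_q dP = (1/d) · (∫ g(‖x‖)² dσ(x)) if p = q, and equals 0 if p ≠ q. -/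
/-!
Reflecting one coordinate and swapping two coordinates are linear isometries. Since `σ` is
invariant under them and the score `x ↦ (g ‖x‖ / ‖x‖) • x` commutes with them, the score has
mean zero, pairwise uncorrelated coordinates, and coordinates of equal second moment, which is
therefore `d⁻¹ ∫ g(‖x‖)² dσ`. Independence kills the cross terms of `T`, so its second moments
are `∑ wᵢ² = 1` times those of a single score.
-/

open MeasureTheory ProbabilityTheory

section Invariance

variable {E F : Type*} [NormedAddCommGroup E] [InnerProductSpace ℝ E] [MeasurableSpace E]
  [BorelSpace E] [NormedAddCommGroup F] [NormedSpace ℝ F] {σ : Measure E}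

theorem integral_comp_linearIsometryEquiv {O : E ≃ₗᵢ[ℝ] E} (hO : σ.map O = σ) (φ : E → F) :
    ∫ x, φ (O x) ∂σ = ∫ x, φ x ∂σ :=
  MeasurePreserving.integral_comp' (f := O.toMeasurableEquiv) ⟨O.continuous.measurable, hO⟩ φ

theorem integral_eq_zero_of_comp_eq_neg {O : E ≃ₗᵢ[ℝ] E} (hO : σ.map O = σ) {φ : E → F}
    (hφ : ∀ x, φ (O x) = -φ x) : ∫ x, φ x ∂σ = 0 := by
  have h : -∫ x, φ x ∂σ = ∫ x, φ x ∂σ := by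
    simpa only [hφ, integral_neg] using integral_comp_linearIsometryEquiv hO φ
  have h2 : (2 : ℝ) • ∫ x, φ x ∂σ = 0 := by
    rw [two_smul]
    nth_rw 1 [← h]
    exact neg_add_cancel _
  exact (smul_eq_zero.mp h2).resolve_left two_ne_zero

end Invariance

namespace EuclideanSpace

variable {ι : Type*} [Fintype ι] [DecidableEq ι]

noncomputable def negCoord (p : ι) : EuclideanSpace ℝ ι ≃ₗᵢ[ℝ] EuclideanSpace ℝ ι :=
  LinearIsometryEquiv.piLpCongrRight 2
    (Function.update (fun _ => LinearIsometryEquiv.refl ℝ ℝ) p (LinearIsometryEquiv.neg ℝ))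

@[simp] theorem negCoord_apply_self (p : ι) (x : EuclideanSpace ℝ ι) :
    negCoord p x p = -x p := by
  simp [negCoord]

@[simp] theorem negCoord_apply_of_ne {p q : ι} (h : q ≠ p) (x : EuclideanSpace ℝ ι) :
    negCoord p x q = x q := by
  simp [negCoord, h]

noncomputable def swapCoord (p q : ι) : EuclideanSpace ℝ ι ≃ₗᵢ[ℝ] EuclideanSpace ℝ ι :=
  LinearIsometryEquiv.piLpCongrLeft 2 ℝ ℝ (Equiv.swap p q)

@[simp] theorem swapCoord_apply (p q : ι) (x : EuclideanSpace ℝ ι) (i : ι) :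
    swapCoord p q x i = x (Equiv.swap p q i) := by
  simp [swapCoord]

end EuclideanSpace

section Equivariant

open EuclideanSpace

variable {ι : Type*} [Fintype ι] {σ : Measure (EuclideanSpace ℝ ι)}
  {f : EuclideanSpace ℝ ι → EuclideanSpace ℝ ι}

theorem integral_apply_mul_apply_eq_zero_of_equivariant
    (hσ : ∀ O : EuclideanSpace ℝ ι ≃ₗᵢ[ℝ] EuclideanSpace ℝ ι, σ.map O = σ)
    (hf : ∀ (O : EuclideanSpace ℝ ι ≃ₗᵢ[ℝ] EuclideanSpace ℝ ι) x, f (O x) = O (f x))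
    {p q : ι} (hpq : p ≠ q) :
    ∫ x, f x p * f x q ∂σ = 0 := by
  classical
  exact integral_eq_zero_of_comp_eq_neg (hσ (negCoord p)) fun x => by
    simp [hf, hpq.symm]

theorem integral_apply_sq_eq_of_equivariant
    (hσ : ∀ O : EuclideanSpace ℝ ι ≃ₗᵢ[ℝ] EuclideanSpace ℝ ι, σ.map O = σ)
    (hf : ∀ (O : EuclideanSpace ℝ ι ≃ₗᵢ[ℝ] EuclideanSpace ℝ ι) x, f (O x) = O (f x)) (p q : ι) :
    ∫ x, f x p ^ 2 ∂σ = ∫ x, f x q ^ 2 ∂σ := by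
  classical
  rw [← integral_comp_linearIsometryEquiv (hσ (swapCoord p q)) (fun x => f x q ^ 2)]
  simp [hf]

theorem integral_apply_sq_of_equivariant
    (hσ : ∀ O : EuclideanSpace ℝ ι ≃ₗᵢ[ℝ] EuclideanSpace ℝ ι, σ.map O = σ)
    (hf : ∀ (O : EuclideanSpace ℝ ι ≃ₗᵢ[ℝ] EuclideanSpace ℝ ι) x, f (O x) = O (f x))
    (hL2 : MemLp f 2 σ) (p : ι) :
    ∫ x, f x p ^ 2 ∂σ = (Fintype.card ι : ℝ)⁻¹ * ∫ x, ‖f x‖ ^ 2 ∂σ := by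
  classical
  have hcoord : ∀ q, Integrable (fun x => f x q ^ 2) σ := fun q =>
    ((EuclideanSpace.proj (𝕜 := ℝ) q).comp_memLp' hL2).integrable_sq
  have hsum : ∫ x, ‖f x‖ ^ 2 ∂σ = Fintype.card ι * ∫ x, f x p ^ 2 ∂σ := by
    simp_rw [EuclideanSpace.real_norm_sq_eq]
    rw [integral_finsetSum _ fun q _ => hcoord q]
    simp [integral_apply_sq_eq_of_equivariant hσ hf _ p]
  have : Nonempty ι := ⟨p⟩
  rw [hsum, inv_mul_cancel_left₀ (by positivity)]

end Equivariant

section Probability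

variable {Ω E : Type*} [MeasurableSpace Ω] {P : Measure Ω} [MeasurableSpace E] {σ : Measure E}

theorem MeasureTheory.MeasurePreserving.integral_comp_of_aestronglyMeasurable
    {F : Type*} [NormedAddCommGroup F] [NormedSpace ℝ F] {V : Ω → E}
    (hV : MeasurePreserving V P σ) {φ : E → F} (hφ : AEStronglyMeasurable φ σ) :
    ∫ ω, φ (V ω) ∂P = ∫ x, φ x ∂σ := by
  rw [← hV.map_eq] at hφ ⊢
  exact (integral_map hV.aemeasurable hφ).symm

theorem integral_sum_mul_sum_of_indepFun {ι : Type*} [Fintype ι]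
    {Y Z : ι → Ω → ℝ} (hY : ∀ i, MemLp (Y i) 2 P) (hZ : ∀ i, MemLp (Z i) 2 P)
    (hY0 : ∀ i, ∫ ω, Y i ω ∂P = 0) (hYZ : ∀ i j, i ≠ j → IndepFun (Y i) (Z j) P) (w : ι → ℝ) :
    ∫ ω, (∑ i, w i * Y i ω) * (∑ i, w i * Z i ω) ∂P = ∑ i, w i ^ 2 * ∫ ω, Y i ω * Z i ω ∂P := by
  classical
  have hint : ∀ i j, Integrable (fun ω => w i * w j * (Y i ω * Z j ω)) P := fun i j =>
    ((hY i).integrable_mul (hZ j)).const_mul _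
  have hcross : ∀ i j, i ≠ j → ∫ ω, Y i ω * Z j ω ∂P = 0 := fun i j hij => by
    rw [← Pi.mul_def, (hYZ i j hij).integral_mul_eq_mul_integral (hY i).1 (hZ j).1, hY0, zero_mul]
  calc ∫ ω, (∑ i, w i * Y i ω) * (∑ i, w i * Z i ω) ∂P
      = ∫ ω, ∑ i, ∑ j, w i * w j * (Y i ω * Z j ω) ∂P := by
        congr 1 with ω
        rw [Finset.sum_mul_sum]
        exact Finset.sum_congr rfl fun i _ => Finset.sum_congr rfl fun j _ => by ring
    _ = ∑ i, ∑ j, w i * w j * ∫ ω, Y i ω * Z j ω ∂P := by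
        rw [integral_finsetSum _ fun i _ => integrable_finsetSum _ fun j _ => hint i j]
        refine Finset.sum_congr rfl fun i _ => ?_
        rw [integral_finsetSum _ fun j _ => hint i j]
        simp only [integral_const_mul]
    _ = ∑ i, w i ^ 2 * ∫ ω, Y i ω * Z i ω ∂P := by
        refine Finset.sum_congr rfl fun i _ => ?_
        rw [Finset.sum_eq_single_of_mem i (Finset.mem_univ i)
          fun j _ hji => by rw [hcross i j hji.symm, mul_zero], sq]

variable {ι : Type*} [Fintype ι] {V : ι → Ω → E}

theorem integral_sum_smul_comp {F : Type*} [NormedAddCommGroup F] [NormedSpace ℝ F]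
    (hV : ∀ i, MeasurePreserving (V i) P σ) {f : E → F} (hf : Integrable f σ) (w : ι → ℝ) :
    ∫ ω, ∑ i, w i • f (V i ω) ∂P = (∑ i, w i) • ∫ x, f x ∂σ := by
  have hint : ∀ i, Integrable (fun ω => w i • f (V i ω)) P := fun i =>
    ((hV i).integrable_comp_of_integrable hf).smul (w i)
  rw [integral_finsetSum _ fun i _ => hint i, Finset.sum_smul]
  simp only [integral_smul, (hV _).integral_comp_of_aestronglyMeasurable hf.1]

theorem integral_sum_smul_comp_apply_mul_apply {κ : Type*} [Fintype κ]
    (hV : ∀ i, MeasurePreserving (V i) P σ) (hind : iIndepFun V P)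
    {f : E → EuclideanSpace ℝ κ} (hfm : Measurable f) (hL2 : MemLp f 2 σ) {p : κ}
    (hp : ∫ x, f x p ∂σ = 0) (q : κ) (w : ι → ℝ) :
    ∫ ω, (∑ i, w i • f (V i ω)) p * (∑ i, w i • f (V i ω)) q ∂P
      = (∑ i, w i ^ 2) * ∫ x, f x p * f x q ∂σ := by
  have hcoord : ∀ r : κ, Measurable fun x => f x r := fun r =>
    (EuclideanSpace.proj (𝕜 := ℝ) r).continuous.measurable.comp hfm
  have hL2coord : ∀ r : κ, MemLp (fun x => f x r) 2 σ := fun r =>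
    (EuclideanSpace.proj (𝕜 := ℝ) r).comp_memLp' hL2
  simp only [WithLp.ofLp_sum, WithLp.ofLp_smul, Finset.sum_apply, Pi.smul_apply, smul_eq_mul]
  rw [integral_sum_mul_sum_of_indepFun (Y := fun i ω => f (V i ω) p) (Z := fun i ω => f (V i ω) q)
    (fun i => (hL2coord p).comp_measurePreserving (hV i))
    (fun i => (hL2coord q).comp_measurePreserving (hV i))
    (fun i => by rw [(hV i).integral_comp_of_aestronglyMeasurable (hL2coord p).1, hp])
    (fun i j hij => (hind.indepFun hij).comp (hcoord p) (hcoord q)), Finset.sum_mul]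
  refine Finset.sum_congr rfl fun i _ => ?_
  rw [(hV i).integral_comp_of_aestronglyMeasurable (φ := fun x => f x p * f x q)
    ((hL2coord p).integrable_mul (hL2coord q)).1]

end Probability

theorem norm_div_norm_smul_self {E : Type*} [NormedAddCommGroup E] [NormedSpace ℝ E] (c : ℝ)
    {x : E} (hx : x ≠ 0) : ‖(c / ‖x‖) • x‖ = |c| := by
  rw [norm_smul, Real.norm_eq_abs, abs_div, abs_norm, div_mul_cancel₀ _ (norm_ne_zero_iff.mpr hx)]

theorem norm_div_norm_smul_self_sq_ae_eq {E : Type*} [NormedAddCommGroup E] [NormedSpace ℝ E]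
    [MeasurableSpace E] {σ : Measure E} (h0 : σ {0} = 0) (g : ℝ → ℝ) :
    (fun x => ‖(g ‖x‖ / ‖x‖) • x‖ ^ 2) =ᵐ[σ] fun x => g ‖x‖ ^ 2 := by
  filter_upwards [compl_mem_ae_iff.mpr h0] with x hx
  rw [norm_div_norm_smul_self _ hx, sq_abs]

theorem spherical_score_statistic_moments_general
    {d : ℕ}
    (σ : Measure (EuclideanSpace ℝ (Fin d))) [IsProbabilityMeasure σ]
    (hrot : ∀ O : EuclideanSpace ℝ (Fin d) ≃ₗᵢ[ℝ] EuclideanSpace ℝ (Fin d),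
      Measure.map O σ = σ)
    (hatom : σ {0} = 0)
    (g : ℝ → ℝ) (hg : Measurable g)
    (hmom : Integrable (fun x => (g ‖x‖) ^ 2) σ)
    {Ω : Type*} [MeasurableSpace Ω] (P : Measure Ω)
    {n : ℕ} (V : Fin n → Ω → EuclideanSpace ℝ (Fin d))
    (hmeas : ∀ i, Measurable (V i))
    (hindep : ProbabilityTheory.iIndepFun
      V P)
    (hlaw : ∀ i, Measure.map (V i) P = σ)
    (w : Fin n → ℝ) (hw2 : ∑ i, (w i) ^ 2 = 1)
    (T : Ω → EuclideanSpace ℝ (Fin d))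
    (hT : ∀ ω, T ω = ∑ i, w i • ((g ‖V i ω‖ / ‖V i ω‖) • V i ω)) :
    (∫ ω, T ω ∂P = 0) ∧
    (∀ p q : Fin d,
      (p = q →
        ∫ ω, T ω p * T ω q ∂P = (1 / (d : ℝ)) * ∫ x, (g ‖x‖) ^ 2 ∂σ) ∧
      (p ≠ q → ∫ ω, T ω p * T ω q ∂P = 0)) := by
  set f : EuclideanSpace ℝ (Fin d) → EuclideanSpace ℝ (Fin d) := fun x => (g ‖x‖ / ‖x‖) • x
  obtain rfl : T = fun ω => ∑ i, w i • f (V i ω) := funext hT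
  have hV : ∀ i, MeasurePreserving (V i) P σ := fun i => ⟨hmeas i, hlaw i⟩
  have hfm : Measurable f := ((hg.comp measurable_norm).div measurable_norm).smul measurable_id
  have hf : ∀ (O : EuclideanSpace ℝ (Fin d) ≃ₗᵢ[ℝ] EuclideanSpace ℝ (Fin d)) x,
      f (O x) = O (f x) := fun O x => by simp [f]
  have hsq := norm_div_norm_smul_self_sq_ae_eq hatom g
  have hL2 : MemLp f 2 σ :=
    (memLp_two_iff_integrable_sq_norm hfm.aestronglyMeasurable).2 (hmom.congr hsq.symm)
  have hmean : ∀ p, ∫ x, f x p ∂σ = 0 := fun p =>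
    integral_eq_zero_of_comp_eq_neg (hrot (.neg ℝ)) fun x => congrArg (· p) (hf (.neg ℝ) x)
  refine ⟨?_, fun p q => ⟨?_, fun hpq => ?_⟩⟩
  · rw [integral_sum_smul_comp hV (hL2.integrable one_le_two),
      integral_eq_zero_of_comp_eq_neg (hrot (.neg ℝ)) (hf (.neg ℝ)), smul_zero]
  · rintro rfl
    rw [integral_sum_smul_comp_apply_mul_apply hV hindep hfm hL2 (hmean p), hw2, one_mul]
    simp only [← sq]
    rw [integral_apply_sq_of_equivariant hrot hf hL2, integral_congr_ae hsq, Fintype.card_fin,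
      one_div]
  · rw [integral_sum_smul_comp_apply_mul_apply hV hindep hfm hL2 (hmean p),
      integral_apply_mul_apply_eq_zero_of_equivariant hrot hf hpq, mul_zero]

/-- Mean and covariance computation in the proof of Proposition 3.2: for i.i.d. random
vectors `V i` with rotation-invariant law `σ` (no atom at the origin), a square-integrable
radial score `g`, and normalized weights `w`, the statistic
`T = ∑ᵢ wᵢ (g(‖Vᵢ‖)/‖Vᵢ‖) Vᵢ` has mean `0` and covariance `d⁻¹(∫ g(‖x‖)² dσ) I_d`. -/
theorem spherical_score_statistic_moments
    {d : ℕ} (hd : 1 ≤ d)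
    (σ : Measure (EuclideanSpace ℝ (Fin d))) [IsProbabilityMeasure σ]
    (hrot : ∀ O : EuclideanSpace ℝ (Fin d) ≃ₗᵢ[ℝ] EuclideanSpace ℝ (Fin d),
      Measure.map O σ = σ)
    (hatom : σ {0} = 0)
    (g : ℝ → ℝ) (hg : Measurable g)
    (hmom : Integrable (fun x => (g ‖x‖) ^ 2) σ)
    {Ω : Type*} [MeasurableSpace Ω] (P : Measure Ω) [IsProbabilityMeasure P]
    {n : ℕ} (V : Fin n → Ω → EuclideanSpace ℝ (Fin d))
    (hmeas : ∀ i, Measurable (V i))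
    (hindep : ProbabilityTheory.iIndepFun
      V P)
    (hlaw : ∀ i, Measure.map (V i) P = σ)
    (w : Fin n → ℝ) (hw2 : ∑ i, (w i) ^ 2 = 1)
    (T : Ω → EuclideanSpace ℝ (Fin d))
    (hT : ∀ ω, T ω = ∑ i, w i • ((g ‖V i ω‖ / ‖V i ω‖) • V i ω)) :
    (∫ ω, T ω ∂P = 0) ∧
    (∀ p q : Fin d,
      (p = q →
        ∫ ω, T ω p * T ω q ∂P = (1 / (d : ℝ)) * ∫ x, (g ‖x‖) ^ 2 ∂σ) ∧
      (p ≠ q → ∫ ω, T ω p * T ω q ∂P = 0)) :=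
  spherical_score_statistic_moments_general σ hrot hatom g hg hmom P V hmeas hindep hlaw w hw2 T hT
end
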